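/- Let J ⊆ {1,...,n} and let x̄(J) = (x̄_j)_{j∈J} be a J-circuit, meaning an injective assignment of values in {v_1,...,v_n} to the indices in J that contains no cycle (there is no sequence j_1,...,j_k of distinct indices in J with x̄_{j_t} = v_{j_{t+1}} for t < k and x̄_{j_k} = v_{j_1}). Then there exists a full circuit x (a single n-cycle on {v_1,...,v_n}) with x_j = x̄_j for all j ∈ J. -/

import Mathlib

/-- A circuit on `{1,...,n}`: a permutation of `Fin n` that is a single `n`-cycle. -/
def IsCircuitPerm {n : ℕ} (σ : Equiv.Perm (Fin n)) : Prop :=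
  σ.IsCycle ∧ σ.support = Finset.univ

/-- The partial assignment `j ↦ f j` (for `j ∈ J`) creates no cycle: there is no
`j ∈ J` and `k ≥ 1` such that the iterates of `f` starting at `j` stay in `J`
and return to `j` after `k` steps. -/
def NoCycleOn {n : ℕ} (f : Fin n → Fin n) (J : Finset (Fin n)) : Prop :=
  ¬ ∃ j ∈ J, ∃ k, 0 < k ∧ (∀ t < k, f^[t] j ∈ J) ∧ f^[k] j = j

/-!
Acyclicity of a partial map on a finite set `J` is the same as: every forward orbit eventually
leaves `J`; in this form it is stable under changing the map off `J`. While at least two indices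
are unassigned, send a free index `j₀` to a value `k₀` outside `f(J)`, choosing `j₀` different from
the point where the orbit of `k₀` leaves `J`; the map stays injective and acyclic. Once only `j₀`
is free, extend to a permutation: every orbit now reaches `j₀`, so all points lie in one cycle,
which has no fixed point since `n ≥ 2`.
-/

open Function Set

def OrbitsLeave {α : Type*} (f : α → α) (s : Set α) : Prop :=
  ∀ x, ∃ m, f^[m] x ∉ s

section Iterate

variable {α : Type*} {f g : α → α} {s : Set α} {x : α} {m : ℕ}

theorem exists_iterate_notMem_forall_lt_mem (h : ∃ m, f^[m] x ∉ s) :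
    ∃ m, (∀ t < m, f^[t] x ∈ s) ∧ f^[m] x ∉ s := by
  classical
  exact ⟨Nat.find h, fun t ht => not_not.1 (Nat.find_min h ht), Nat.find_spec h⟩

theorem iterate_eq_of_eqOn (h : EqOn g f s) (hx : ∀ t < m, f^[t] x ∈ s) :
    g^[m] x = f^[m] x := by
  induction m with
  | zero => rfl
  | succ m ih =>
    rw [iterate_succ_apply', iterate_succ_apply', ih fun t ht => hx t (by omega),
      h (hx m m.lt_succ_self)]

theorem OrbitsLeave.congr (hf : OrbitsLeave f s) (h : EqOn g f s) : OrbitsLeave g s := by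
  intro x
  obtain ⟨m, hm, hexit⟩ := exists_iterate_notMem_forall_lt_mem (hf x)
  exact ⟨m, by rwa [iterate_eq_of_eqOn h hm]⟩

/-- Adding the arrow `j₀ ↦ k₀` can only close a cycle through `j₀`, that is, if the `f`-orbit of
`k₀` leaves `s` exactly at `j₀`. -/
theorem OrbitsLeave.extend {j₀ k₀ : α} (hf : OrbitsLeave f s) (hg : EqOn g f s)
    (hgj₀ : g j₀ = k₀) (hm : ∀ t < m, f^[t] k₀ ∈ s) (hexit : f^[m] k₀ ∉ insert j₀ s) :
    OrbitsLeave g (insert j₀ s) := by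
  have hj₀ : g^[m + 1] j₀ ∉ insert j₀ s := by
    rwa [iterate_succ_apply, hgj₀, iterate_eq_of_eqOn hg hm]
  intro x
  obtain ⟨p, hp⟩ := hf.congr hg x
  by_cases hpj₀ : g^[p] x = j₀
  · exact ⟨m + 1 + p, by rwa [iterate_add_apply, hpj₀]⟩
  · exact ⟨p, by simp [hpj₀, hp]⟩

end Iterate

theorem NoCycleOn.orbitsLeave {n : ℕ} {f : Fin n → Fin n} {J : Finset (Fin n)}
    (hnc : NoCycleOn f J) : OrbitsLeave f J := by
  intro x
  by_contra! hx
  obtain ⟨s, t, hst, heq⟩ := Set.finite_univ.exists_lt_map_eq_of_forall_mem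
    (f := fun m => f^[m] x) (fun _ => Set.mem_univ _)
  refine hnc ⟨f^[s] x, hx s, t - s, by omega, fun u _ => ?_, ?_⟩
  · rw [← iterate_add_apply]; exact hx _
  · rw [← iterate_add_apply, Nat.sub_add_cancel hst.le]; exact heq.symm

theorem Set.InjOn.exists_perm_eqOn {α : Type*} [Finite α] {g : α → α} {s : Set α}
    (hg : InjOn g s) : ∃ σ : Equiv.Perm α, EqOn σ g s := by
  classical
  exact ⟨(hg.bijOn_image.equiv g).extendSubtype, fun x hx => by
    rw [Equiv.extendSubtype_apply_of_mem _ _ hx]; rfl⟩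

theorem Equiv.Perm.isCycle_and_support_eq_univ_of_forall_sameCycle {α : Type*} [Fintype α]
    [DecidableEq α] [Nontrivial α] {σ : Equiv.Perm α} {j₀ : α} (h : ∀ x, σ.SameCycle x j₀) :
    σ.IsCycle ∧ σ.support = Finset.univ := by
  have hj₀ : σ j₀ ≠ j₀ := by
    obtain ⟨x, hx⟩ := exists_ne j₀
    exact fun hfix => hx ((h x).eq_of_right hfix)
  refine ⟨⟨j₀, hj₀, fun y _ => (h y).symm⟩, Finset.eq_univ_iff_forall.2 fun y => ?_⟩
  exact Equiv.Perm.mem_support.2 fun hfix => hj₀ (((h y).apply_eq_self_iff).1 hfix)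

section Extension

variable {α : Type*} [Fintype α] [DecidableEq α] {f : α → α} {J : Finset α}

theorem exists_insert_injOn_orbitsLeave (hinj : InjOn f J) (hf : OrbitsLeave f J)
    (hJ : 1 < Jᶜ.card) : ∃ j₀ ∉ J, ∃ g : α → α,
      EqOn g f J ∧ InjOn g ↑(insert j₀ J) ∧ OrbitsLeave g ↑(insert j₀ J) := by
  obtain ⟨k₀, hk₀⟩ : ∃ k₀, k₀ ∉ J.image f := by
    refine Finset.exists_mem_notMem_of_card_lt_card (t := Finset.univ) ?_ |>.imp fun _ h => h.2
    have := J.card_compl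
    rw [Finset.card_univ]
    exact J.card_image_le.trans_lt (by omega)
  obtain ⟨m, hm, hexit⟩ := exists_iterate_notMem_forall_lt_mem (hf k₀)
  obtain ⟨j₀, hj₀, hne⟩ := (Finset.one_lt_card_iff_nontrivial.1 hJ).exists_ne (f^[m] k₀)
  have hj₀J : j₀ ∉ J := Finset.mem_compl.1 hj₀
  have hgf : EqOn (update f j₀ k₀) f J := fun x hx =>
    update_of_ne (ne_of_mem_of_not_mem hx hj₀J) _ _
  refine ⟨j₀, hj₀J, update f j₀ k₀, hgf, ?_, ?_⟩
  · rw [Finset.coe_insert, injOn_insert (by simpa), update_self, hgf.image_eq]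
    exact ⟨hinj.congr hgf.symm, by simpa using hk₀⟩
  · rw [Finset.coe_insert]
    exact hf.extend hgf (update_self _ _ _) hm (by simp [hne.symm, hexit])

theorem exists_perm_eqOn_forall_sameCycle [Nonempty α] (hinj : InjOn f J)
    (hf : OrbitsLeave f J) : ∃ σ : Equiv.Perm α, ∃ j₀, EqOn σ f J ∧ ∀ x, σ.SameCycle x j₀ := by
  obtain ⟨k, hk⟩ : ∃ k, Jᶜ.card = k + 1 := by
    obtain ⟨m, hm⟩ := hf (Classical.arbitrary α)
    exact Nat.exists_eq_add_one.2 (Finset.card_pos.2 ⟨_, Finset.mem_compl.2 hm⟩)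
  induction k generalizing J f with
  | zero =>
    obtain ⟨j₀, hj₀⟩ := Finset.card_eq_one.1 hk
    have hJ : (J : Set α) = {j₀}ᶜ := by
      rw [← Finset.coe_singleton, ← Finset.coe_compl, ← hj₀, compl_compl]
    obtain ⟨σ, hσf⟩ := hinj.exists_perm_eqOn
    refine ⟨σ, j₀, hσf, fun x => ?_⟩
    obtain ⟨m, hm⟩ := (hf.congr hσf) x
    rw [hJ, mem_compl_singleton_iff, not_not, Equiv.Perm.iterate_eq_pow] at hm
    rw [← hm]
    exact Equiv.Perm.sameCycle_pow_right.2 Equiv.Perm.SameCycle.rfl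
  | succ k ih =>
    obtain ⟨j₀, hj₀, g, hgf, hginj, hg⟩ := exists_insert_injOn_orbitsLeave hinj hf (by omega)
    obtain ⟨σ, j₁, hσg, hσ⟩ := ih hginj hg (by
      rw [Finset.compl_insert, Finset.card_erase_of_mem (Finset.mem_compl.2 hj₀), hk]; rfl)
    exact ⟨σ, j₁, (hσg.mono (by simp)).trans hgf, hσ⟩

end Extension

theorem stmt_4 (n : ℕ) (hn : 2 ≤ n) (v : Fin n → ℝ)
    (J : Finset (Fin n)) (f : Fin n → Fin n)
    (hinj : Set.InjOn f J) (hnc : NoCycleOn f J) :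
    ∃ σ : Equiv.Perm (Fin n), IsCircuitPerm σ ∧ ∀ j ∈ J, v (σ j) = v (f j) := by
  have : Nontrivial (Fin n) := Fin.nontrivial_iff_two_le.2 hn
  obtain ⟨σ, j₀, hσf, hσ⟩ := exists_perm_eqOn_forall_sameCycle hinj hnc.orbitsLeave
  exact ⟨σ, σ.isCycle_and_support_eq_univ_of_forall_sameCycle hσ, fun j hj => congrArg v (hσf hj)⟩
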